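/- arXiv:1306.0438 — 4 statements merged into one kernel-verified Lean document; each statement's English description precedes it below -/
import Mathlib

section
/- Let $u,v$ be positive integers, let $A$ be a $u \times v$ matrix over $\mathbb{Q}$, and let $b$ be a positive rational. Then the matrix $(A \; -bI_u)$ is kernel partition regular if and only if the $(v+u) \times v$ matrix $\binom{bI_v}{A}$ (the rows of $b$ times the $v\times v$ identity stacked above the rows of $A$) is image partition regular. -/
/-
Write `b = p / q` with `p, q` positive integers. If `z` is a monochromatic kernel vector of
`(A  -bI)` for the colouring `n ↦ φ (p * n)` and `z₁` is its first block, then `x := q • z₁`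
satisfies `(bI; A) x = p • z`, whose entries have a single `φ`-colour. Conversely,
`(A  -bI) * (bI; A) = bA - bA = 0`, so any monochromatic image `(bI; A) x` is itself a
monochromatic kernel vector.
-/

open Matrix

/-- `M` is kernel partition regular: for every finite colouring of the positive
integers there is a monochromatic vector of positive integers in the kernel. -/
def KPR {u : ℕ} {n : Type} [Fintype n] (M : Matrix (Fin u) n ℚ) : Prop :=
  ∀ (r : ℕ) (φ : ℕ → Fin r), ∃ x : n → ℕ,
    (∀ i, 0 < x i) ∧ (∀ i j, φ (x i) = φ (x j)) ∧
    M.mulVec (fun i => (x i : ℚ)) = 0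

/-- `B` is image partition regular: for every finite colouring of the positive
integers there is `x` with positive integer entries such that the entries of
`B *ᵥ x` are positive integers of the same colour. -/
def IPR {m : Type} {v : ℕ} (B : Matrix m (Fin v) ℚ) : Prop :=
  ∀ (r : ℕ) (φ : ℕ → Fin r), ∃ x : Fin v → ℕ, (∀ j, 0 < x j) ∧
    ∃ y : m → ℕ, (∀ i, 0 < y i) ∧
      (∀ i, (y i : ℚ) = B.mulVec (fun j => (x j : ℚ)) i) ∧
      ∀ i i', φ (y i) = φ (y i')

namespace Matrix

variable {R m n : Type*} [CommRing R] [Fintype m] [Fintype n] [DecidableEq m] [DecidableEq n]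

theorem fromCols_neg_smul_one_mul_fromRows_smul_one (A : Matrix m n R) (b : R) :
    fromCols A (-b • (1 : Matrix m m R)) * fromRows (b • (1 : Matrix n n R)) A = 0 := by
  simp [fromCols_mul_fromRows]

theorem fromRows_smul_one_mulVec_smul_comp_inl {A : Matrix m n R} {b : R} {z : n ⊕ m → R}
    (hz : fromCols A (-b • (1 : Matrix m m R)) *ᵥ z = 0) (c : R) :
    fromRows (b • (1 : Matrix n n R)) A *ᵥ (c • (z ∘ Sum.inl)) = (c * b) • z := by
  have hA : A *ᵥ (z ∘ Sum.inl) = b • (z ∘ Sum.inr) := by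
    rwa [fromCols_mulVec, neg_smul, neg_mulVec, smul_mulVec, one_mulVec, ← sub_eq_add_neg,
      sub_eq_zero] at hz
  ext (j | i)
  · simp only [smul_mulVec, one_mulVec, fromRows_mulVec, Sum.elim_inl, Pi.smul_apply, smul_eq_mul,
      Function.comp_apply]
    ring
  · simp [mulVec_smul, hA, mul_assoc]

end Matrix

theorem Rat.exists_nat_mul_eq_nat {b : ℚ} (hb : 0 < b) :
    ∃ p q : ℕ, 0 < p ∧ 0 < q ∧ (q : ℚ) * b = p := by
  refine ⟨b.num.toNat, b.den, by simpa using Rat.num_pos.mpr hb, b.den_pos, ?_⟩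
  rw [mul_comm, Rat.mul_den_eq_num]
  exact_mod_cast (Int.toNat_of_nonneg (Rat.num_nonneg.mpr hb.le)).symm

theorem stmt_4_general (u v : ℕ) (A : Matrix (Fin u) (Fin v) ℚ)
    (b : ℚ) (hb : 0 < b) :
    KPR (Matrix.fromCols A (-b • (1 : Matrix (Fin u) (Fin u) ℚ))) ↔
      IPR (Matrix.fromRows (b • (1 : Matrix (Fin v) (Fin v) ℚ)) A) := by
  constructor
  · intro hK r φ
    obtain ⟨p, q, hp, hq, hqb⟩ := Rat.exists_nat_mul_eq_nat hb
    obtain ⟨z, hz, hzφ, hker⟩ := hK r (fun n => φ (p * n))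
    refine ⟨fun j => q * z (.inl j), fun j => Nat.mul_pos hq (hz _),
      fun i => p * z i, fun i => Nat.mul_pos hp (hz _), fun i => ?_, hzφ⟩
    have hx : (fun j => ((q * z (.inl j) : ℕ) : ℚ)) = (q : ℚ) • ((fun k => (z k : ℚ)) ∘ .inl) := by
      ext; simp
    rw [hx, fromRows_smul_one_mulVec_smul_comp_inl hker, hqb]
    simp
  · intro hI r φ
    obtain ⟨x, -, y, hy, hyx, hyφ⟩ := hI r φ
    refine ⟨y, hy, hyφ, ?_⟩
    rw [funext hyx, mulVec_mulVec, fromCols_neg_smul_one_mul_fromRows_smul_one, zero_mulVec]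

theorem stmt_4 (u v : ℕ) (hu : 0 < u) (hv : 0 < v) (A : Matrix (Fin u) (Fin v) ℚ)
    (b : ℚ) (hb : 0 < b) :
    KPR (Matrix.fromCols A (-b • (1 : Matrix (Fin u) (Fin u) ℚ))) ↔
      IPR (Matrix.fromRows (b • (1 : Matrix (Fin v) (Fin v) ℚ)) A) :=
  stmt_4_general u v A b hb
end

section
/- The $2 \times 3$ matrix $A = \begin{pmatrix} 4 & -4 & 2 \\ 5 & -5 & 3 \end{pmatrix}$ is doubly image partition regular, but there is no positive integer $b$ such that the matrix $(A \; -bI_2)$ is kernel partition regular. -/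
open Matrix

/-- `A` is doubly image partition regular: for every finite colouring of the
positive integers there is `x` with positive integer entries, monochromatic,
such that the entries of `A *ᵥ x` are positive integers which are
monochromatic (possibly of another colour). -/
def DoublyIPR {u v : ℕ} (A : Matrix (Fin u) (Fin v) ℚ) : Prop :=
  ∀ (r : ℕ) (φ : ℕ → Fin r), ∃ x : Fin v → ℕ,
    (∀ i, 0 < x i) ∧ (∀ i j, φ (x i) = φ (x j)) ∧
    ∃ y : Fin u → ℕ, (∀ i, 0 < y i) ∧
      (∀ i, (y i : ℚ) = A.mulVec (fun j => (x j : ℚ)) i) ∧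
      ∀ i j, φ (y i) = φ (y j)

/-!
For double image partition regularity, colour `n` by the pair of colours of `n` and `n / 2`.
Iterating van der Waerden's theorem (Deuber's argument) gives `S, E, U > 0` such that
`4S, 4S + 2E, 4E + U, 4E + 6U, 4U` all receive the same pair. Then `x = (4S, 4S + 2E, 4E + U)` is
monochromatic and `A x = (2U, 2E + 3U)` is monochromatic, as these are the halves of `4U` and
`4E + 6U`.

For the kernel, eliminating the last two columns turns a kernel vector into a solution of
`2 x₃ + 5b y₁ - 4b y₂ = 0`. Colour `n` by the residue mod `p` of its `p`-free part, for a
prime `p > 9b + 2`. In a monochromatic solution the coefficients of the terms of least `p`-adic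
valuation sum to `0` mod `p`, but no nonempty subsum of `2, 5b, -4b` is divisible by `p`.
-/

open Finset

namespace Combinatorics.Line

theorem sum_val_apply {ι : Type*} [Fintype ι] {L : ℕ} (l : Line (Fin (L + 1)) ι)
    (x : Fin (L + 1)) :
    ∑ i, (l x i : ℕ) = ∑ i, (l 0 i : ℕ) + x * #{i | l.idxFun i = none} := by
  have h : ∀ i, (l x i : ℕ) = l 0 i + if l.idxFun i = none then (x : ℕ) else 0 := by
    intro i
    cases hi : l.idxFun i <;> simp [hi]
  rw [sum_congr rfl fun i _ => h i, sum_add_distrib, sum_ite, sum_const, sum_const_zero,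
    smul_eq_mul, add_zero, mul_comm]

end Combinatorics.Line

open Combinatorics in
theorem exists_bounded_mono_arithProg (R : Type*) [Finite R] (L : ℕ) :
    ∃ W, ∀ κ : ℕ → R, ∃ a d, 0 < a ∧ 0 < d ∧ a ≤ W ∧ d ≤ W ∧
      ∀ t ≤ L, κ (a + t * d) = κ a := by
  classical
  obtain ⟨ι, _, hι⟩ := Line.exists_mono_in_high_dimension (Fin (L + 1)) R
  refine ⟨(Fintype.card ι + 1) * (L + 1), fun κ => ?_⟩
  -- Summing coordinates maps a combinatorial line onto an arithmetic progression.
  obtain ⟨l, col, hl⟩ := hι fun v => κ (1 + ∑ i, (v i : ℕ))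
  have hbase : ∑ i, (l 0 i : ℕ) ≤ Fintype.card ι * L :=
    (sum_le_card_nsmul _ _ _ fun i _ => Nat.lt_succ_iff.mp (l 0 i).isLt).trans_eq (by simp)
  have hslope : #{i | l.idxFun i = none} ≤ Fintype.card ι := card_le_univ _
  obtain ⟨i₀, hi₀⟩ := l.proper
  refine ⟨1 + ∑ i, (l 0 i : ℕ), #{i | l.idxFun i = none}, by omega,
    card_pos.mpr ⟨i₀, by simpa using hi₀⟩, by nlinarith, by nlinarith, fun t ht => ?_⟩
  have h₁ : κ (1 + ∑ i, (l ⟨t, by omega⟩ i : ℕ)) = col := hl _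
  have h₀ : κ (1 + ∑ i, (l 0 i : ℕ)) = col := hl 0
  rw [l.sum_val_apply] at h₁
  rw [add_assoc, h₁, h₀]

/-- The bound `N` is what lets the next level of the induction fit inside a single van der
Waerden progression. -/
theorem exists_mono_rows (R : Type*) [Finite R] {c : ℕ} (hc : 0 < c) (p m : ℕ) :
    ∃ N, ∀ κ : ℕ → R, ∃ d : ℕ → ℕ, (∀ i < m, 0 < d i ∧ d i ≤ N) ∧
      ∀ i j, i < j → j < m → ∀ l ≤ p, κ (c * d i + l * d j) = κ (c * d i) := by
  induction m with
  | zero => exact ⟨0, fun κ => ⟨0, by simp, by omega⟩⟩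
  | succ m ih =>
    obtain ⟨N, hN⟩ := ih
    obtain ⟨W, hW⟩ := exists_bounded_mono_arithProg R (p * N)
    refine ⟨W + c * W * N, fun κ => ?_⟩
    obtain ⟨a, δ, ha, hδ, haW, hδW, hap⟩ := hW fun n => κ (c * n)
    obtain ⟨d, hd, hrows⟩ := hN fun n => κ (c * δ * n)
    refine ⟨fun | 0 => a | k + 1 => c * δ * d k, ?_, ?_⟩
    · rintro (_ | k) hk
      · exact ⟨ha, le_add_right haW⟩
      · obtain ⟨hpos, hle⟩ := hd k (by omega)
        exact ⟨by positivity, le_add_left (by dsimp only; gcongr)⟩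
    · rintro (_ | i) (_ | j) hij hj l hl
      · omega
      · have hlt : l * d j ≤ p * N := Nat.mul_le_mul hl (hd j (by omega)).2
        dsimp only
        rw [← hap (l * d j) hlt]
        ring_nf
      · omega
      · dsimp only
        convert hrows i j (by omega) (by omega) l hl using 2 <;> ring

theorem exists_three_lt_eq {R : Type*} [Fintype R] (X : ℕ → R) :
    ∃ i j k, i < j ∧ j < k ∧ k < 2 * Fintype.card R + 1 ∧ X j = X i ∧ X k = X i := by
  classical
  obtain ⟨y, -, hy⟩ := exists_lt_card_fiber_of_mul_lt_card_of_maps_to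
    (s := range (2 * Fintype.card R + 1)) (t := univ) (f := X) (n := 2) (by simp) (by simp; omega)
  set T := {x ∈ range (2 * Fintype.card R + 1) | X x = y}
  set e := T.orderEmbOfFin rfl
  have he : ∀ a, e a < 2 * Fintype.card R + 1 ∧ X (e a) = y := fun a => by
    simpa only [T, mem_filter, mem_range] using T.orderEmbOfFin_mem rfl a
  refine ⟨e ⟨0, by omega⟩, e ⟨1, by omega⟩, e ⟨2, by omega⟩, e.strictMono (by simp),
    e.strictMono (by simp), (he _).1, ?_, ?_⟩ <;> simp only [(he _).2]

theorem exists_mono_config {R : Type*} [Finite R] (κ : ℕ → R) :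
    ∃ S E U, 0 < S ∧ 0 < E ∧ 0 < U ∧ κ (4 * S + 2 * E) = κ (4 * S) ∧
      κ (4 * E + U) = κ (4 * S) ∧ κ (4 * E + 6 * U) = κ (4 * S) ∧
      κ (4 * U) = κ (4 * S) := by
  have := Fintype.ofFinite R
  obtain ⟨N, hN⟩ := exists_mono_rows R four_pos 6 (2 * Fintype.card R + 1)
  obtain ⟨d, hd, hrows⟩ := hN κ
  obtain ⟨i, j, k, hij, hjk, hk, hji, hki⟩ := exists_three_lt_eq fun n => κ (4 * d n)
  refine ⟨d i, d j, d k, (hd i (by omega)).1, (hd j (by omega)).1, (hd k hk).1, ?_, ?_, ?_, hki⟩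
  · exact hrows i j hij (by omega) 2 (by omega)
  · simpa [hji] using hrows j k hjk hk 1 le_add_self
  · rw [hrows j k hjk hk 6 le_rfl, hji]

theorem doublyIPR_example : DoublyIPR !![(4 : ℚ), -4, 2; 5, -5, 3] := by
  intro r φ
  obtain ⟨S, E, U, hS, hE, hU, h₁, h₂, h₃, h₄⟩ :=
    exists_mono_config fun n => (φ n, φ (n / 2))
  have hy : φ (2 * E + 3 * U) = φ (2 * U) := by
    have := congrArg Prod.snd (h₃.trans h₄.symm)
    simpa [show (4 * E + 6 * U) / 2 = 2 * E + 3 * U by omega,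
      show 4 * U / 2 = 2 * U by omega] using this
  refine ⟨![4 * S, 4 * S + 2 * E, 4 * E + U], ?_, ?_, ![2 * U, 2 * E + 3 * U], ?_, ?_, ?_⟩
  · intro i; fin_cases i <;> simp <;> omega
  · have hx₁ : φ (4 * S + 2 * E) = φ (4 * S) := congrArg Prod.fst h₁
    have hx₂ : φ (4 * E + U) = φ (4 * S) := congrArg Prod.fst h₂
    intro i j; fin_cases i <;> fin_cases j <;> simp_all
  · intro i; fin_cases i <;> simp <;> omega
  · intro i
    fin_cases i <;> simp [mulVec, dotProduct, Fin.sum_univ_succ] <;> ring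
  · intro i j; fin_cases i <;> fin_cases j <;> simp [hy]

theorem exists_dvd_sum_of_ordCompl_modEq {ι : Type*} [Fintype ι] [Nonempty ι] {p : ℕ}
    (hp : p.Prime) (c : ι → ℤ) (n : ι → ℕ) (hn : ∀ i, n i ≠ 0)
    (hcol : ∀ i j, ordCompl[p] (n i) ≡ ordCompl[p] (n j) [MOD p])
    (hsum : ∑ i, c i * (n i : ℤ) = 0) :
    ∃ T : Finset ι, T.Nonempty ∧ (p : ℤ) ∣ ∑ i ∈ T, c i := by
  classical
  have := Fact.mk hp
  set v := fun i => (n i).factorization p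
  obtain ⟨i₀, hi₀⟩ := Finite.exists_min v
  set T : Finset ι := {i | v i = v i₀}
  refine ⟨T, ⟨i₀, by simp [T]⟩, ?_⟩
  set u := fun i => ordCompl[p] (n i)
  have hn_eq : ∀ i, (n i : ℤ) = p ^ v i * u i := fun i => by
    exact_mod_cast (Nat.ordProj_mul_ordCompl_eq_self (n i) p).symm
  -- Modulo `p ^ (v i₀ + 1)` only the terms of least valuation survive; after dividing them by
  -- `p ^ v i₀`, their `p`-free parts all agree mod `p`.
  have hdvd : (p : ℤ) ^ (v i₀ + 1) ∣ ∑ i ∈ T, c i * n i := by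
    rw [eq_neg_of_add_eq_zero_left ((sum_add_sum_compl T _).trans hsum), dvd_neg]
    refine dvd_sum fun i hi => ?_
    have hlt : v i₀ < v i := lt_of_le_of_ne (hi₀ i) (Ne.symm (by simpa [T] using hi))
    rw [hn_eq]
    exact (dvd_mul_of_dvd_left (pow_dvd_pow _ hlt) _).mul_left _
  have hfactor : ∑ i ∈ T, c i * n i = p ^ v i₀ * ∑ i ∈ T, c i * u i := by
    rw [mul_sum]
    refine sum_congr rfl fun i hi => ?_
    rw [hn_eq, (mem_filter.mp hi).2]
    ring
  rw [hfactor, pow_succ, mul_dvd_mul_iff_left (by simp [hp.ne_zero])] at hdvd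
  rw [← ZMod.intCast_zmod_eq_zero_iff_dvd] at hdvd ⊢
  have hu : ∀ i, (u i : ZMod p) = u i₀ := fun i =>
    (ZMod.natCast_eq_natCast_iff _ _ _).mpr (hcol i i₀)
  push_cast at hdvd ⊢
  simp only [hu, ← sum_mul] at hdvd
  have hu₀ : (u i₀ : ZMod p) ≠ 0 := by
    rw [Ne, ZMod.natCast_eq_zero_iff]
    exact Nat.not_dvd_ordCompl hp (hn i₀)
  exact (mul_eq_zero.mp hdvd).resolve_right hu₀

theorem not_dvd_sum_subset {b p : ℕ} (hb : 0 < b) (hp : 9 * b + 2 < p) {T : Finset (Fin 3)}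
    (hT : T.Nonempty) : ¬ (p : ℤ) ∣ ∑ i ∈ T, ![2, 5 * (b : ℤ), -4 * b] i := by
  classical
  intro hdvd
  have hsum : ∑ i ∈ T, ![2, 5 * (b : ℤ), -4 * b] i =
      (if 0 ∈ T then 2 else 0) + (if 1 ∈ T then 5 * (b : ℤ) else 0) +
        (if 2 ∈ T then -4 * (b : ℤ) else 0) := by
    rw [← Fintype.sum_ite_mem, Fin.sum_univ_three]
    rfl
  rw [hsum] at hdvd
  have := Int.eq_zero_of_abs_lt_dvd hdvd (by rw [abs_lt]; split_ifs <;> omega)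
  obtain ⟨i, hi⟩ := hT
  fin_cases i <;> split_ifs at this <;> simp_all <;> omega

theorem relation_of_fromCols_mulVec_eq_zero {b : ℕ} {x : Fin 3 ⊕ Fin 2 → ℕ}
    (hx : Matrix.fromCols !![(4 : ℚ), -4, 2; 5, -5, 3]
        (-(b : ℚ) • (1 : Matrix (Fin 2) (Fin 2) ℚ)) *ᵥ (fun i => (x i : ℚ)) = 0) :
    2 * (x (.inl 2) : ℤ) + 5 * b * x (.inr 0) - 4 * b * x (.inr 1) = 0 := by
  have h₀ := congrFun hx 0
  have h₁ := congrFun hx 1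
  simp only [mulVec, dotProduct, neg_smul, Fin.isValue, Fintype.sum_sum_type, fromCols_apply_inl,
    of_apply, cons_val', cons_val_fin_one, cons_val_zero, Fin.sum_univ_three, cons_val_one, neg_mul,
    Matrix.cons_val, fromCols_apply_inr, Matrix.neg_apply, Matrix.smul_apply, one_apply,
    smul_eq_mul, mul_ite, mul_one, mul_zero, ite_mul, zero_mul, sum_neg_distrib, sum_ite_eq,
    mem_univ, ↓reduceIte, Pi.zero_apply] at h₀ h₁
  have : (2 * x (.inl 2) + 5 * b * x (.inr 0) - 4 * b * x (.inr 1) : ℚ) = 0 := by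
    linear_combination 4 * h₁ - 5 * h₀
  exact_mod_cast this

theorem not_KPR_example (b : ℕ) (hb : 0 < b) :
    ¬ KPR (Matrix.fromCols !![(4 : ℚ), -4, 2; 5, -5, 3]
        (-(b : ℚ) • (1 : Matrix (Fin 2) (Fin 2) ℚ))) := by
  intro hK
  obtain ⟨p, hbp, hp⟩ := Nat.exists_infinite_primes (9 * b + 3)
  obtain ⟨x, hpos, hmono, hx⟩ := hK p fun n => ⟨ordCompl[p] n % p, Nat.mod_lt _ hp.pos⟩
  let e : Fin 3 → Fin 3 ⊕ Fin 2 := ![.inl 2, .inr 0, .inr 1]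
  have hrel : ∑ i, ![2, 5 * (b : ℤ), -4 * b] i * (x (e i) : ℤ) = 0 := by
    rw [Fin.sum_univ_three]
    show 2 * (x (.inl 2) : ℤ) + 5 * b * x (.inr 0) + -4 * b * x (.inr 1) = 0
    linear_combination relation_of_fromCols_mulVec_eq_zero hx
  obtain ⟨T, hT, hdvd⟩ := exists_dvd_sum_of_ordCompl_modEq hp _ (x ∘ e)
    (fun i => (hpos _).ne') (fun i j => congrArg Fin.val (hmono _ _)) hrel
  exact not_dvd_sum_subset hb hbp hT hdvd

theorem stmt_6 :
    DoublyIPR !![(4 : ℚ), -4, 2; 5, -5, 3] ∧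
      ∀ b : ℕ, 0 < b →
        ¬ KPR (Matrix.fromCols !![(4 : ℚ), -4, 2; 5, -5, 3]
            (-(b : ℚ) • (1 : Matrix (Fin 2) (Fin 2) ℚ))) :=
  ⟨doublyIPR_example, not_KPR_example⟩
end

section
/- The $2\times 2$ diagonal matrix $\begin{pmatrix} 1 & 0 \\ 0 & 2 \end{pmatrix}$ is image partition regular but not doubly image partition regular. (For non-double IPR: colour each positive integer $n$ by the parity of $\lfloor \log_2 n \rfloor$; then there is no $\vec x \in \mathbb{N}^2$ with $x_1, x_2$ the same colour and $x_1, 2x_2$ the same colour.) -/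
open Matrix

/-! The diagonal matrix `diag(d)` is image partition regular: with `L = ∏ dᵢ`, taking
`xᵢ = L / dᵢ` makes every entry of the image equal to `L`. It is not doubly image partition
regular for `d = (1, b)`, `b ≥ 2`: multiplying by `b` raises `⌊log_b n⌋` by one, so colouring
`n` by the parity of `⌊log_b n⌋` forces `x₂` and `b x₂` to receive different colours, while
double regularity would give both the colour of `x₁`. -/

lemma natCast_eq_diagonal_mulVec_iff {ι : Type} [Fintype ι] [DecidableEq ι]
    (d x : ι → ℕ) (y : ℕ) (i : ι) :
    (y : ℚ) = (diagonal (fun j => (d j : ℚ)) *ᵥ fun j => (x j : ℚ)) i ↔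
      y = d i * x i := by
  rw [mulVec_diagonal]
  exact_mod_cast Iff.rfl

theorem ipr_diagonal {v : ℕ} (d : Fin v → ℕ) (hd : ∀ i, 0 < d i) :
    IPR (diagonal fun i => (d i : ℚ)) := by
  intro r φ
  have hdvd : ∀ i, d i ∣ ∏ j, d j := fun i => Finset.dvd_prod_of_mem d (Finset.mem_univ i)
  have hprod : 0 < ∏ j, d j := Finset.prod_pos fun j _ => hd j
  refine ⟨fun j => (∏ k, d k) / d j,
    fun j => Nat.div_pos (Nat.le_of_dvd hprod (hdvd j)) (hd j),
    fun _ => ∏ k, d k, fun _ => hprod, fun i => ?_, fun _ _ => rfl⟩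
  rw [natCast_eq_diagonal_mulVec_iff]
  exact (Nat.mul_div_cancel' (hdvd i)).symm

def logParityColouring (b n : ℕ) : Fin 2 :=
  ⟨Nat.log b n % 2, Nat.mod_lt _ two_pos⟩

lemma logParityColouring_base_mul_ne {b n : ℕ} (hb : 1 < b) (hn : n ≠ 0) :
    logParityColouring b (b * n) ≠ logParityColouring b n := by
  rw [mul_comm, logParityColouring, logParityColouring, Ne, Fin.mk.injEq,
    Nat.log_mul_base hb hn]
  omega

theorem not_doublyIPR_diagonal_one_base {b : ℕ} (hb : 1 < b) :
    ¬ DoublyIPR (diagonal fun i => ((![1, b] i : ℕ) : ℚ)) := by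
  intro h
  obtain ⟨x, hx, hx_mono, y, -, hy, hy_mono⟩ := h 2 (logParityColouring b)
  have hy₀ : y 0 = x 0 := by simpa using (natCast_eq_diagonal_mulVec_iff _ x _ 0).1 (hy 0)
  have hy₁ : y 1 = b * x 1 := (natCast_eq_diagonal_mulVec_iff _ x _ 1).1 (hy 1)
  apply logParityColouring_base_mul_ne hb (hx 1).ne'
  rw [← hy₁, ← hy_mono 0 1, hy₀, hx_mono 0 1]

lemma diag_one_two_eq_diagonal :
    !![(1 : ℚ), 0; 0, 2] = diagonal fun i => ((![1, 2] i : ℕ) : ℚ) := by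
  ext i j
  fin_cases i <;> fin_cases j <;> simp

theorem stmt_10 :
    IPR !![(1 : ℚ), 0; 0, 2] ∧ ¬ DoublyIPR !![(1 : ℚ), 0; 0, 2] := by
  rw [diag_one_two_eq_diagonal]
  exact ⟨ipr_diagonal _ (by simp [Fin.forall_fin_two]),
    not_doublyIPR_diagonal_one_base one_lt_two⟩
end

section
/- Let $u,v,w$ be positive integers, let $A$ be a $u\times v$ and $B$ a $u\times w$ matrix over $\mathbb{Q}$. If there exists a positive rational $c$ such that the $u\times(v+w)$ matrix $(A \; cB)$ is kernel partition regular, then $(A,B)$ is doubly kernel partition regular: for every finite colouring of $\mathbb{N}$ there exist vectors $\vec x \in \mathbb{N}^v$ and $\vec y \in \mathbb{N}^w$, each monochromatic (possibly in different colours), with $A\vec x + B\vec y = \vec 0$. -/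
open Matrix

/-- `(A, B)` is doubly kernel partition regular. -/
def DoublyKPR {u v w : ℕ} (A : Matrix (Fin u) (Fin v) ℚ) (B : Matrix (Fin u) (Fin w) ℚ) : Prop :=
  ∀ (r : ℕ) (φ : ℕ → Fin r), ∃ (x : Fin v → ℕ) (y : Fin w → ℕ),
    (∀ i, 0 < x i) ∧ (∀ i, 0 < y i) ∧
    (∀ i j, φ (x i) = φ (x j)) ∧ (∀ i j, φ (y i) = φ (y j)) ∧
    A.mulVec (fun j => (x j : ℚ)) + B.mulVec (fun j => (y j : ℚ)) = 0

/- Write `c = p / q` with `p, q` positive integers and colour `n` by the pair `(φ (q n), φ (p n))`.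
A monochromatic kernel vector `(x, y)` of `(A  c B)` for this colouring gives `x' = q x`
and `y' = p y`, each monochromatic for `φ`, with `A x' + B y' = q (A x + c B y) = 0`. -/

theorem KPR.exists_monochromatic_for_two_colourings {u : ℕ} {n : Type} [Fintype n]
    {M : Matrix (Fin u) n ℚ} (hM : KPR M) {r s : ℕ} (φ : ℕ → Fin r) (ψ : ℕ → Fin s) :
    ∃ z : n → ℕ, (∀ i, 0 < z i) ∧ (∀ i j, φ (z i) = φ (z j)) ∧
      (∀ i j, ψ (z i) = ψ (z j)) ∧ M *ᵥ (fun i => (z i : ℚ)) = 0 := by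
  obtain ⟨z, hz_pos, hz_mono, hz_ker⟩ := hM (r * s) fun k => finProdFinEquiv (φ k, ψ k)
  have hpair : ∀ i j, (φ (z i), ψ (z i)) = (φ (z j), ψ (z j)) := fun i j =>
    finProdFinEquiv.injective (hz_mono i j)
  exact ⟨z, hz_pos, fun i j => congrArg Prod.fst (hpair i j),
    fun i j => congrArg Prod.snd (hpair i j), hz_ker⟩

theorem Rat.exists_nat_eq_mul_nat_of_pos {c : ℚ} (hc : 0 < c) :
    ∃ p q : ℕ, 0 < p ∧ 0 < q ∧ (p : ℚ) = c * q := by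
  refine ⟨c.num.natAbs, c.den, Int.natAbs_pos.2 (Rat.num_pos.2 hc).ne', c.pos, ?_⟩
  rw [Nat.cast_natAbs, Int.cast_abs, abs_of_pos (Int.cast_pos.2 (Rat.num_pos.2 hc)),
    Rat.mul_den_eq_num]

theorem Matrix.mulVec_smul_add_mulVec_smul_eq_smul_fromCols {R ι m n : Type*} [CommRing R]
    [Fintype m] [Fintype n] (A : Matrix ι m R) (B : Matrix ι n R) (c q : R) (x : m → R)
    (y : n → R) :
    A *ᵥ (q • x) + B *ᵥ ((c * q) • y) = q • (fromCols A (c • B) *ᵥ Sum.elim x y) := by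
  rw [fromCols_mulVec_sumElim, mulVec_smul, mulVec_smul, smul_mulVec, smul_add, smul_smul,
    mul_comm c q]

theorem stmt_15_general (u v w : ℕ)
    (A : Matrix (Fin u) (Fin v) ℚ) (B : Matrix (Fin u) (Fin w) ℚ)
    (c : ℚ) (hc : 0 < c) (hKPR : KPR (Matrix.fromCols A (c • B))) :
    DoublyKPR A B := by
  intro r φ
  obtain ⟨p, q, hp, hq, hpq⟩ := Rat.exists_nat_eq_mul_nat_of_pos hc
  obtain ⟨z, hz_pos, hz_mono_q, hz_mono_p, hz_ker⟩ :=
    hKPR.exists_monochromatic_for_two_colourings (fun k => φ (q * k)) (fun k => φ (p * k))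
  refine ⟨fun i => q * z (.inl i), fun i => p * z (.inr i), fun i => Nat.mul_pos hq (hz_pos _),
    fun i => Nat.mul_pos hp (hz_pos _), fun i j => hz_mono_q _ _, fun i j => hz_mono_p _ _, ?_⟩
  have hcast : ∀ (a : ℕ) {ι : Type} (t : ι → ℕ),
      (fun i => ((a * t i : ℕ) : ℚ)) = (a : ℚ) • fun i => (t i : ℚ) :=
    fun a _ t => funext fun i => Nat.cast_mul a (t i)
  rw [hcast, hcast, hpq, mulVec_smul_add_mulVec_smul_eq_smul_fromCols]
  have hsplit : (Sum.elim (fun i => (z (.inl i) : ℚ)) fun i => (z (.inr i) : ℚ)) =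
      fun i => (z i : ℚ) := Sum.elim_comp_inl_inr fun i => (z i : ℚ)
  rw [hsplit, hz_ker, smul_zero]

theorem stmt_15 (u v w : ℕ) (hu : 0 < u) (hv : 0 < v) (hw : 0 < w)
    (A : Matrix (Fin u) (Fin v) ℚ) (B : Matrix (Fin u) (Fin w) ℚ)
    (c : ℚ) (hc : 0 < c) (hKPR : KPR (Matrix.fromCols A (c • B))) :
    DoublyKPR A B :=
  stmt_15_general u v w A B c hc hKPR
end
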